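/- Define g^m_{ℓ,n} = ∫_{−1}^{1} P_ℓ^m(x) P_n^m(x) / √(1 − x²) dx for integers m ≤ min{ℓ, n}. Then for all m, k ∈ ℕ: g^m_{m,m+2k} = g^m_{m+2k,m} = π · ((2m)!/4^{2m+2k}) · C(2k, k) · C(2m, m) · C(2m+2k, m+k), where C(a, b) denotes the binomial coefficient. -/

import Mathlib

/-!
On `[-1, 1]` the two factors `(1 - x²)^{m/2}` and the denominator `√(1 - x²)` combine into
the Gegenbauer weight `(1 - x²)^{m - 1/2}`, and `dᵐ/dxᵐ P_m` is the constant `(2m)!/(2^m m!)`.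
Expanding the Rodrigues formula binomially, `g^m_{m,m+2k}` becomes a finite combination of the
moments `∫ x^{2i} (1 - x²)^{m - 1/2} dx`, which integration by parts evaluates as Beta values.
Writing `C(2n, n) = (-4)^n C(-1/2, n)`, the resulting sum collapses by the Chu–Vandermonde
identity for `C(-1/2, m + k)`.
-/

open MeasureTheory

/-- The Legendre polynomial via the Rodrigues formula
`P_n(x) = (1/(2^n n!)) dⁿ/dxⁿ (x² − 1)ⁿ`. -/
noncomputable def legendreP (n : ℕ) (x : ℝ) : ℝ :=
  (1 / ((2 : ℝ) ^ n * Nat.factorial n)) * iteratedDeriv n (fun y : ℝ => (y ^ 2 - 1) ^ n) x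

/-- The associated Legendre function on `(−1,1)`:
`P_n^m(x) = (−1)^m (1 − x²)^{m/2} dᵐ/dxᵐ P_n(x)`. -/
noncomputable def assocLegendreP (n m : ℕ) (x : ℝ) : ℝ :=
  (-1 : ℝ) ^ m * (1 - x ^ 2) ^ ((m : ℝ) / 2) * iteratedDeriv m (legendreP n) x

/-- `g^m_{ℓ,n} = ∫_{−1}^{1} P_ℓ^m(x) P_n^m(x)/√(1 − x²) dx`. -/
noncomputable def gInt (m l n : ℕ) : ℝ :=
  ∫ x in (-1 : ℝ)..1, assocLegendreP l m x * assocLegendreP n m x / Real.sqrt (1 - x ^ 2)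

open Polynomial Finset
open scoped Nat

lemma Ring.succ_mul_choose_succ {R : Type*} [Ring R] [BinomialRing R] (r : R) (n : ℕ) :
    (n + 1 : R) * Ring.choose r (n + 1) = Ring.choose r n * (r - n) := by
  have h := Ring.choose_smul_choose r (Nat.le_succ n)
  rw [Nat.choose_succ_self_right, show n.succ - n = 1 by omega, Ring.choose_one_right,
    nsmul_eq_mul] at h
  exact_mod_cast h

lemma Nat.cast_centralBinom_eq_neg_four_pow_mul_choose {K : Type*} [Field K] [CharZero K]
    (n : ℕ) :
    (n.centralBinom : K) = (-4) ^ n * Ring.choose (-1 / 2 : K) n := by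
  induction n with
  | zero => simp
  | succ n ih =>
    have hc : ((n + 1 : ℕ) : K) * (n + 1).centralBinom = 2 * (2 * n + 1) * n.centralBinom := by
      exact_mod_cast Nat.succ_mul_centralBinom_succ n
    rw [ih] at hc
    apply mul_left_cancel₀ (Nat.cast_ne_zero.mpr n.succ_ne_zero : ((n + 1 : ℕ) : K) ≠ 0)
    rw [hc]
    push_cast
    linear_combination -(-4) ^ (n + 1) * Ring.succ_mul_choose_succ (-1 / 2 : K) n

lemma Ring.choose_eq_sum_choose_mul_choose_sub {R : Type*} [CommRing R] [BinomialRing R] (r : R)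
    (m k : ℕ) :
    Ring.choose r (m + k)
      = ∑ i ∈ range (k + 1), (k.choose i : R) * Ring.choose (r - k) (m + i) := by
  conv_lhs => rw [← add_sub_cancel (k : R) r]
  rw [Ring.add_choose_eq _ (Commute.all _ _), Nat.sum_antidiagonal_eq_sum_range_succ_mk,
    Nat.succ_eq_add_one, show m + k + 1 = (k + 1) + m by omega, sum_range_add,
    ← sum_range_reflect]
  simp only [Ring.choose_natCast]
  rw [sum_eq_zero (s := range m) fun j _ => by rw [Nat.choose_eq_zero_of_lt (by omega)]; simp,
    add_zero]
  refine sum_congr rfl fun i hi => ?_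
  rw [mem_range] at hi
  rw [show k + 1 - 1 - i = k - i by omega, Nat.choose_symm (by omega),
    show m + k - (k - i) = m + i by omega]

lemma sum_neg_four_pow_mul_choose_mul_centralBinom {K : Type*} [Field K] [CharZero K]
    (m k : ℕ) :
    ∑ i ∈ range (k + 1), (-4 : K) ^ (k - i) * k.choose i * (m + k + i).choose k
        * (m + k + i).centralBinom
      = k.centralBinom * (m + k).centralBinom := by
  have hterm : ∀ i ∈ range (k + 1), (-4 : K) ^ (k - i) * k.choose i * (m + k + i).choose k
        * (m + k + i).centralBinom
      = (-4) ^ (m + 2 * k) * Ring.choose (-1 / 2 : K) k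
        * ((k.choose i : K) * Ring.choose (-1 / 2 - k : K) (m + i)) := by
    intro i hi
    rw [mem_range] at hi
    have h := Ring.choose_smul_choose (-1 / 2 : K) (show k ≤ m + k + i by omega)
    rw [nsmul_eq_mul, show m + k + i - k = m + i by omega] at h
    rw [Nat.cast_centralBinom_eq_neg_four_pow_mul_choose, mul_left_comm _ ((-4 : K) ^ _),
      mul_assoc, h, show m + 2 * k = (k - i) + (m + k + i) by omega, pow_add]
    ring
  rw [sum_congr rfl hterm, ← mul_sum, ← Ring.choose_eq_sum_choose_mul_choose_sub,
    Nat.cast_centralBinom_eq_neg_four_pow_mul_choose,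
    Nat.cast_centralBinom_eq_neg_four_pow_mul_choose, show m + 2 * k = k + (m + k) by ring,
    pow_add]
  ring

lemma Nat.cast_descFactorial_eq_div {K : Type*} [Field K] [CharZero K] {n k : ℕ} (h : k ≤ n) :
    (n.descFactorial k : K) = n ! / (n - k)! := by
  rw [eq_div_iff (Nat.cast_ne_zero.mpr (n - k).factorial_ne_zero), ← Nat.cast_mul, mul_comm,
    Nat.factorial_mul_descFactorial h]

lemma Polynomial.iteratedDeriv_eval {𝕜 : Type*} [NontriviallyNormedField 𝕜] (p : 𝕜[X])
    (k : ℕ) :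
    iteratedDeriv k (fun x => p.eval x) = fun x => (derivative^[k] p).eval x := by
  induction k with
  | zero => simp
  | succ k ih =>
    ext x
    rw [iteratedDeriv_succ, ih, Function.iterate_succ_apply', Polynomial.deriv]

lemma iterate_derivative_X_sq_sub_one_pow {R : Type*} [CommRing R] (n r : ℕ) :
    derivative^[r] ((X ^ 2 - 1 : R[X]) ^ n) = ∑ j ∈ range (n + 1),
      C ((-1) ^ (n - j) * n.choose j * (2 * j).descFactorial r : R) * X ^ (2 * j - r) := by
  have hexp : (X ^ 2 - 1 : R[X]) ^ n
      = ∑ j ∈ range (n + 1), C ((-1) ^ (n - j) * n.choose j : R) * X ^ (2 * j) := by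
    rw [sub_eq_add_neg, add_pow]
    refine sum_congr rfl fun j _ => ?_
    simp only [C_mul, C_pow, C_neg, C_1, map_natCast, pow_mul]
    ring
  simp only [hexp, iterate_derivative_sum, iterate_derivative_C_mul,
    iterate_derivative_X_pow_eq_C_mul, ← mul_assoc]
  simp only [C_mul, map_natCast]

lemma iteratedDeriv_legendreP (n m : ℕ) (x : ℝ) :
    iteratedDeriv m (legendreP n) x = ((2 : ℝ) ^ n * n !)⁻¹ * ∑ j ∈ range (n + 1),
      (-1) ^ (n - j) * n.choose j * (2 * j).descFactorial (n + m) * x ^ (2 * j - (n + m)) := by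
  have hP : legendreP n
      = fun x => (C ((2 : ℝ) ^ n * n !)⁻¹ * derivative^[n] ((X ^ 2 - 1) ^ n)).eval x := by
    ext y
    have hq : (fun y : ℝ => (y ^ 2 - 1) ^ n) = fun y => ((X ^ 2 - 1 : ℝ[X]) ^ n).eval y := by
      simp
    rw [legendreP, hq, iteratedDeriv_eval]
    simp
  rw [hP, iteratedDeriv_eval, iterate_derivative_C_mul, ← Function.iterate_add_apply,
    add_comm m n, iterate_derivative_X_sq_sub_one_pow]
  simp [eval_finsetSum]

lemma iteratedDeriv_legendreP_self (m : ℕ) (x : ℝ) :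
    iteratedDeriv m (legendreP m) x = (2 * m)! / (2 ^ m * m !) := by
  rw [iteratedDeriv_legendreP, sum_range_succ, sum_eq_zero fun j hj => ?_]
  · rw [← two_mul, Nat.descFactorial_self, Nat.sub_self, Nat.choose_self]
    simp [div_eq_inv_mul]
  · rw [Nat.descFactorial_eq_zero_iff_lt.mpr (by rw [mem_range] at hj; omega)]
    simp

noncomputable def gegenbauerWeight (m : ℕ) (x : ℝ) : ℝ := (1 - x ^ 2) ^ m / √(1 - x ^ 2)

noncomputable def gegenbauerMoment (m e : ℕ) : ℝ :=
  ∫ x in (-1 : ℝ)..1, x ^ e * gegenbauerWeight m x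

lemma intervalIntegrable_inv_sqrt_one_sub_sq :
    IntervalIntegrable (fun x : ℝ => (√(1 - x ^ 2))⁻¹) volume (-1) 1 := by
  refine intervalIntegral.intervalIntegrable_deriv_of_nonneg (g := Real.arcsin)
    Real.continuous_arcsin.continuousOn (fun x hx => ?_) (fun x _ => by positivity)
  rw [min_eq_left (by norm_num), max_eq_right (by norm_num)] at hx
  simpa using Real.hasDerivAt_arcsin hx.1.ne' hx.2.ne

lemma intervalIntegrable_pow_mul_gegenbauerWeight (m e : ℕ) :
    IntervalIntegrable (fun x => x ^ e * gegenbauerWeight m x) volume (-1) 1 := by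
  simp_rw [gegenbauerWeight, div_eq_mul_inv, ← mul_assoc]
  exact intervalIntegrable_inv_sqrt_one_sub_sq.continuousOn_mul (by fun_prop)

lemma hasDerivAt_pow_mul_sqrt_one_sub_sq_pow (m e : ℕ) {x : ℝ}
    (hx : x ∈ Set.Ioo (-1 : ℝ) 1) :
    HasDerivAt (fun y => y ^ (e + 1) * √(1 - y ^ 2) ^ (2 * m + 1))
      ((e + 1) * (x ^ e * gegenbauerWeight m x)
        - (e + 2 * m + 2) * (x ^ (e + 2) * gegenbauerWeight m x)) x := by
  have hu : 0 < 1 - x ^ 2 := by nlinarith [hx.1, hx.2]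
  have hs : √(1 - x ^ 2) ≠ 0 := (Real.sqrt_pos.mpr hu).ne'
  have hsq : √(1 - x ^ 2) ^ 2 = 1 - x ^ 2 := Real.sq_sqrt hu.le
  have hroot : HasDerivAt (fun y => √(1 - y ^ 2)) (-x / √(1 - x ^ 2)) x := by
    refine (((hasDerivAt_pow 2 x).const_sub 1).sqrt hu.ne').congr_deriv ?_
    field_simp
    ring
  refine ((hasDerivAt_pow (e + 1) x).mul (hroot.fun_pow (2 * m + 1))).congr_deriv ?_
  rw [gegenbauerWeight]
  set s := √(1 - x ^ 2)
  rw [← hsq, ← pow_mul]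
  field_simp
  push_cast
  linear_combination ((e : ℝ) + 1) * x ^ e * s ^ (2 * m) * hsq

lemma gegenbauerMoment_add_two (m e : ℕ) :
    (e + 2 * m + 2) * gegenbauerMoment m (e + 2) = (e + 1) * gegenbauerMoment m e := by
  have hint := fun e => intervalIntegrable_pow_mul_gegenbauerWeight m e
  have hFTC := intervalIntegral.integral_eq_sub_of_hasDeriv_right_of_le (by norm_num)
    (by fun_prop) (fun x hx => (hasDerivAt_pow_mul_sqrt_one_sub_sq_pow m e hx).hasDerivWithinAt)
    (((hint e).const_mul _).sub ((hint (e + 2)).const_mul _))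
  rw [intervalIntegral.integral_sub ((hint e).const_mul _) ((hint (e + 2)).const_mul _),
    intervalIntegral.integral_const_mul, intervalIntegral.integral_const_mul] at hFTC
  norm_num at hFTC
  rw [gegenbauerMoment, gegenbauerMoment]
  linarith

lemma gegenbauerMoment_succ (m e : ℕ) :
    gegenbauerMoment (m + 1) e = gegenbauerMoment m e - gegenbauerMoment m (e + 2) := by
  rw [gegenbauerMoment, gegenbauerMoment, gegenbauerMoment, ← intervalIntegral.integral_sub
    (intervalIntegrable_pow_mul_gegenbauerWeight m e)
    (intervalIntegrable_pow_mul_gegenbauerWeight m (e + 2))]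
  congr 1; ext x
  simp only [gegenbauerWeight]
  ring

lemma gegenbauerMoment_zero_zero : gegenbauerMoment 0 0 = Real.pi := by
  have hFTC := intervalIntegral.integral_eq_sub_of_hasDeriv_right_of_le (by norm_num)
    Real.continuous_arcsin.continuousOn
    (fun x hx => by simpa using (Real.hasDerivAt_arcsin hx.1.ne' hx.2.ne).hasDerivWithinAt)
    intervalIntegrable_inv_sqrt_one_sub_sq
  rw [gegenbauerMoment]
  simp only [gegenbauerWeight, pow_zero, one_mul, one_div]
  rw [hFTC, Real.arcsin_one, Real.arcsin_neg_one]
  ring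

lemma gegenbauerMoment_zero (m : ℕ) :
    gegenbauerMoment m 0 = Real.pi * (2 * m)! / (4 ^ m * m ! * m !) := by
  induction m with
  | zero => simpa using gegenbauerMoment_zero_zero
  | succ m ih =>
    have h2 : gegenbauerMoment m 2 = gegenbauerMoment m 0 / (2 * m + 2) := by
      have := gegenbauerMoment_add_two m 0
      push_cast at this
      rw [eq_div_iff (by positivity)]
      linarith
    rw [gegenbauerMoment_succ, h2, ih, show 2 * (m + 1) = 2 * m + 1 + 1 by ring,
      Nat.factorial_succ, Nat.factorial_succ, Nat.factorial_succ]
    push_cast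
    field_simp
    ring

lemma gegenbauerMoment_two_mul (m i : ℕ) :
    gegenbauerMoment m (2 * i)
      = Real.pi * (2 * i)! * (2 * m)! / (4 ^ (m + i) * i ! * m ! * (m + i)!) := by
  induction i with
  | zero => simpa using gegenbauerMoment_zero m
  | succ i ih =>
    have hrec : gegenbauerMoment m (2 * i + 2)
        = (2 * i + 1) / (2 * i + 2 * m + 2) * gegenbauerMoment m (2 * i) := by
      have := gegenbauerMoment_add_two m (2 * i)
      push_cast at this
      rw [div_mul_eq_mul_div, eq_div_iff (by positivity)]
      linarith
    rw [show 2 * (i + 1) = 2 * i + 1 + 1 by ring, show m + (i + 1) = m + i + 1 by ring, hrec,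
      ih, Nat.factorial_succ, Nat.factorial_succ, Nat.factorial_succ, Nat.factorial_succ]
    push_cast
    field_simp
    ring

lemma assocLegendreP_mul_assocLegendreP (l n m : ℕ) {x : ℝ} (hx : x ^ 2 ≤ 1) :
    assocLegendreP l m x * assocLegendreP n m x
      = iteratedDeriv m (legendreP l) x * iteratedDeriv m (legendreP n) x * (1 - x ^ 2) ^ m := by
  have hsign : ((-1 : ℝ) ^ m) ^ 2 = 1 := by rw [← pow_mul, pow_mul', neg_one_sq, one_pow]
  have hroot : ((1 - x ^ 2) ^ ((m : ℝ) / 2)) ^ 2 = (1 - x ^ 2) ^ m := by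
    rw [← Real.rpow_mul_natCast (by linarith), Nat.cast_ofNat, div_mul_cancel₀ _ two_ne_zero,
      Real.rpow_natCast]
  rw [assocLegendreP, assocLegendreP]
  linear_combination (iteratedDeriv m (legendreP l) x * iteratedDeriv m (legendreP n) x) *
    (((1 - x ^ 2) ^ ((m : ℝ) / 2)) ^ 2 * hsign + hroot)

lemma gInt_eq_integral_iteratedDeriv (m l n : ℕ) :
    gInt m l n = ∫ x in (-1 : ℝ)..1,
      iteratedDeriv m (legendreP l) x * iteratedDeriv m (legendreP n) x * gegenbauerWeight m x := by
  refine intervalIntegral.integral_congr fun x hx => ?_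
  rw [Set.uIcc_of_le (by norm_num)] at hx
  have hx2 : x ^ 2 ≤ 1 := by nlinarith [hx.1, hx.2]
  simp only [gegenbauerWeight]
  rw [assocLegendreP_mul_assocLegendreP l n m hx2, mul_div_assoc]

lemma integral_iteratedDeriv_legendreP_mul_gegenbauerWeight (n m : ℕ) :
    ∫ x in (-1 : ℝ)..1, iteratedDeriv m (legendreP n) x * gegenbauerWeight m x
      = ((2 : ℝ) ^ n * n !)⁻¹ * ∑ j ∈ range (n + 1), (-1) ^ (n - j) * n.choose j
          * (2 * j).descFactorial (n + m) * gegenbauerMoment m (2 * j - (n + m)) := by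
  simp_rw [iteratedDeriv_legendreP, mul_assoc, sum_mul, mul_assoc]
  rw [intervalIntegral.integral_const_mul, intervalIntegral.integral_finsetSum fun j _ =>
    (((intervalIntegrable_pow_mul_gegenbauerWeight m _).const_mul _).const_mul _).const_mul _]
  simp_rw [intervalIntegral.integral_const_mul, gegenbauerMoment]

lemma integral_iteratedDeriv_legendreP_add_two_mul_mul_gegenbauerWeight (m k : ℕ) :
    ∫ x in (-1 : ℝ)..1, iteratedDeriv m (legendreP (m + 2 * k)) x * gegenbauerWeight m x
      = ((2 : ℝ) ^ (m + 2 * k) * (m + 2 * k)!)⁻¹ * ∑ i ∈ range (k + 1), (-1) ^ (k - i)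
          * (m + 2 * k).choose (m + k + i) * (2 * (m + k + i)).descFactorial (2 * m + 2 * k)
          * gegenbauerMoment m (2 * i) := by
  rw [integral_iteratedDeriv_legendreP_mul_gegenbauerWeight,
    show m + 2 * k + 1 = (m + k) + (k + 1) by ring, sum_range_add, sum_eq_zero, zero_add]
  · refine congrArg _ (sum_congr rfl fun i _ => ?_)
    rw [show m + 2 * k - (m + k + i) = k - i by omega,
      show m + 2 * k + m = 2 * m + 2 * k by ring,
      show 2 * (m + k + i) - (2 * m + 2 * k) = 2 * i by omega]
  · intro j hj
    rw [mem_range] at hj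
    rw [Nat.descFactorial_eq_zero_iff_lt.mpr (by omega)]
    simp

lemma gInt_self_add_two_mul (m k : ℕ) :
    gInt m m (m + 2 * k)
      = Real.pi * (2 * m)! / 4 ^ (2 * m + 2 * k) * (2 * k).choose k * (2 * m).choose m
          * (2 * m + 2 * k).choose (m + k) := by
  have hterm : ∀ i ∈ range (k + 1),
      (2 * m)! / (2 ^ m * m !) * (((2 : ℝ) ^ (m + 2 * k) * (m + 2 * k)!)⁻¹ * ((-1) ^ (k - i)
        * (m + 2 * k).choose (m + k + i) * (2 * (m + k + i)).descFactorial (2 * m + 2 * k)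
        * gegenbauerMoment m (2 * i)))
      = Real.pi * (2 * m)! * (2 * m).choose m / 4 ^ (2 * m + 2 * k)
        * ((-4) ^ (k - i) * k.choose i * (m + k + i).choose k * (m + k + i).centralBinom) := by
    intro i hi
    obtain ⟨d, rfl⟩ : ∃ d, k = i + d := ⟨k - i, by rw [mem_range] at hi; omega⟩
    rw [Nat.cast_descFactorial_eq_div (by omega), gegenbauerMoment_two_mul,
      Nat.centralBinom_eq_two_mul_choose,
      Nat.cast_choose ℝ (show m + (i + d) + i ≤ m + 2 * (i + d) by omega),
      Nat.cast_choose ℝ (show i ≤ i + d by omega),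
      Nat.cast_choose ℝ (show i + d ≤ m + (i + d) + i by omega),
      Nat.cast_choose ℝ (show m + (i + d) + i ≤ 2 * (m + (i + d) + i) by omega),
      Nat.cast_choose ℝ (show m ≤ 2 * m by omega),
      show m + 2 * (i + d) - (m + (i + d) + i) = d by omega, show i + d - i = d by omega,
      show m + (i + d) + i - (i + d) = m + i by omega,
      show 2 * (m + (i + d) + i) - (m + (i + d) + i) = m + (i + d) + i by omega,
      show 2 * m - m = m by omega,
      show 2 * (m + (i + d) + i) - (2 * m + 2 * (i + d)) = 2 * i by omega, neg_pow (4 : ℝ)]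
    simp only [show (4 : ℝ) = 2 ^ 2 by norm_num, ← pow_mul]
    field_simp
    ring
  rw [gInt_eq_integral_iteratedDeriv]
  simp_rw [iteratedDeriv_legendreP_self, mul_assoc]
  rw [intervalIntegral.integral_const_mul,
    integral_iteratedDeriv_legendreP_add_two_mul_mul_gegenbauerWeight, mul_sum, mul_sum,
    sum_congr rfl hterm, ← mul_sum, sum_neg_four_pow_mul_choose_mul_centralBinom,
    Nat.centralBinom_eq_two_mul_choose, Nat.centralBinom_eq_two_mul_choose,
    show 2 * (m + k) = 2 * m + 2 * k by ring]
  ring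

lemma gInt_comm (m l n : ℕ) : gInt m l n = gInt m n l := by
  simp only [gInt, mul_comm (assocLegendreP l m _)]

/-- For all `m, k ∈ ℕ`:
`g^m_{m,m+2k} = g^m_{m+2k,m} = π ((2m)!/4^{2m+2k}) C(2k,k) C(2m,m) C(2m+2k,m+k)`. -/
theorem gInt_first_row (m k : ℕ) :
    gInt m m (m + 2 * k)
        = Real.pi * (Nat.factorial (2 * m) : ℝ) / 4 ^ (2 * m + 2 * k) *
            (Nat.choose (2 * k) k : ℝ) * (Nat.choose (2 * m) m : ℝ) *
            (Nat.choose (2 * m + 2 * k) (m + k) : ℝ) ∧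
    gInt m (m + 2 * k) m
        = Real.pi * (Nat.factorial (2 * m) : ℝ) / 4 ^ (2 * m + 2 * k) *
            (Nat.choose (2 * k) k : ℝ) * (Nat.choose (2 * m) m : ℝ) *
            (Nat.choose (2 * m + 2 * k) (m + k) : ℝ) :=
  ⟨gInt_self_add_two_mul m k, (gInt_comm m _ _).trans (gInt_self_add_two_mul m k)⟩
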